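/- Let D be a positive integer with decimal expansion D = Σ_{i=0}^n a_i·10^i (a_n ≠ 0) such that D > rev(D) and E = D − rev(D) has the same number of decimal digits as D, and let F = E + rev(E). Then F = 99 · Σ_{i=0}^{n−1} b_{n−1−i}·10^i, where (b_i) is the digital borrow sequence of D; that is, the decimal digit string of F/99 is the reverse of the digital borrow sequence b_{n−1} b_{n−2} … b_1 b_0. -/

import Mathlib

/-- Digital reversal of a natural number (in base 10). -/
def rev (D : ℕ) : ℕ := Nat.ofDigits 10 ((Nat.digits 10 D).reverse)

/-- The digital borrow sequence for the subtraction `D - rev D`, where `a` is the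
digit sequence of `D` (little-endian) and `n+1` is the number of digits:
`b i = 1` iff `a i - a (n-i) - b (i-1) < 0`, with `b (-1) = 0`. -/
def borrow (a : ℕ → ℕ) (n : ℕ) : ℕ → ℕ
  | 0 => if (a 0 : ℤ) - (a n : ℤ) < 0 then 1 else 0
  | i + 1 => if (a (i + 1) : ℤ) - (a (n - (i + 1)) : ℤ) - (borrow a n i : ℤ) < 0 then 1 else 0

/-!
Schoolbook subtraction writes `E = D - rev D` with digits
`e_i = a_i - a_{n-i} - b_{i-1} + 10 b_i`. Since `D > rev D` the final borrow `b_n` vanishes, and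
since `E` has `n + 1` digits, `e_n` is its leading digit, so `rev E = ∑ e_{n-i} 10^i`. In
`E + rev E` the digits of `D` cancel in pairs, and what is left, `∑_k (10 b_{n-k} - b_{n-k-1}) 10^k`,
telescopes to `99 ∑_{i<n} b_{n-1-i} 10^i` because the borrows at both ends are zero.
-/

open Finset

namespace Nat

theorem ofDigits_map_range (b : ℕ) (f : ℕ → ℕ) (m : ℕ) :
    ofDigits b ((List.range m).map f) = ∑ i ∈ range m, f i * b ^ i := by
  induction m with
  | zero => simp
  | succ m ih =>
    rw [List.range_succ, List.map_append, ofDigits_append, ih, sum_range_succ]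
    simp [mul_comm]

theorem digits_sum_range_succ {b m : ℕ} (hb : 1 < b) {f : ℕ → ℕ} (hf : ∀ i ≤ m, f i < b)
    (hm : f m ≠ 0) :
    digits b (∑ i ∈ range (m + 1), f i * b ^ i) = (List.range (m + 1)).map f := by
  rw [← ofDigits_map_range]
  refine digits_ofDigits b hb _ ?_ fun _ => ?_
  · simp only [List.mem_map, List.mem_range]
    rintro _ ⟨i, hi, rfl⟩
    exact hf i (Nat.lt_succ_iff.mp hi)
  · simpa [List.getLast_eq_getElem] using hm

theorem sum_range_lt_pow {b m : ℕ} (hb : 1 < b) {f : ℕ → ℕ} (hf : ∀ i < m, f i < b) :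
    ∑ i ∈ range m, f i * b ^ i < b ^ m := by
  rw [← ofDigits_map_range]
  simpa using ofDigits_lt_base_pow_length hb (l := (List.range m).map f) (by simpa using hf)

theorem ne_zero_of_length_digits_sum_range_succ {b m : ℕ} (hb : 1 < b) {f : ℕ → ℕ}
    (hf : ∀ i ≤ m, f i < b) (hlen : (digits b (∑ i ∈ range (m + 1), f i * b ^ i)).length = m + 1) :
    f m ≠ 0 := by
  intro hm
  have hlt : ∑ i ∈ range (m + 1), f i * b ^ i < b ^ m := by
    rw [sum_range_succ, hm, zero_mul, add_zero]
    exact sum_range_lt_pow hb fun i hi => hf i hi.le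
  have := (digits_length_le_iff hb _).2 hlt
  omega

end Nat

theorem rev_sum_range_succ {m : ℕ} {f : ℕ → ℕ} (hf : ∀ i ≤ m, f i < 10) (hm : f m ≠ 0) :
    rev (∑ i ∈ range (m + 1), f i * 10 ^ i) = ∑ i ∈ range (m + 1), f (m - i) * 10 ^ i := by
  rw [rev, Nat.digits_sum_range_succ (by norm_num) hf hm, ← List.map_reverse,
    List.range_eq_range', List.reverse_range', List.map_map, Nat.ofDigits_map_range]
  simp

theorem sum_range_telescope_carry {R : Type*} [CommRing R] (x : R) (c : ℕ → R) (m : ℕ) :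
    ∑ i ∈ range m, (x * c (i + 1) - c i) * x ^ i = c m * x ^ m - c 0 := by
  have h := sum_range_sub (fun i => c i * x ^ i) m
  rw [pow_zero, mul_one] at h
  rw [← h]
  refine sum_congr rfl fun i _ => ?_
  ring

theorem sum_range_carry_of_boundary_eq_zero {R : Type*} [CommRing R] (x : R) {d : ℕ → R} {n : ℕ}
    (h0 : d 0 = 0) (hn : d (n + 1) = 0) :
    ∑ k ∈ range (n + 1), (x * d k - d (k + 1)) * x ^ k
      = (x ^ 2 - 1) * ∑ i ∈ range n, d (i + 1) * x ^ i := by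
  simp only [sub_mul, sum_sub_distrib, mul_sum]
  rw [sum_range_succ' (fun k => x * d k * x ^ k), sum_range_succ (fun k => d (k + 1) * x ^ k),
    h0, hn]
  simp only [zero_mul, mul_zero, add_zero, ← sum_sub_distrib]
  refine sum_congr rfl fun i _ => ?_
  ring

section Borrow

variable {a : ℕ → ℕ} {n : ℕ}

def borrowIn (a : ℕ → ℕ) (n : ℕ) : ℕ → ℕ
  | 0 => 0
  | i + 1 => borrow a n i

theorem borrow_eq_ite (i : ℕ) :
    borrow a n i = if (a i : ℤ) - a (n - i) - borrowIn a n i < 0 then 1 else 0 := by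
  cases i <;> simp [borrow, borrowIn]

theorem borrow_le_one (i : ℕ) : borrow a n i ≤ 1 := by
  rw [borrow_eq_ite]; split <;> simp

theorem borrowIn_le_one (i : ℕ) : borrowIn a n i ≤ 1 := by
  cases i
  · simp [borrowIn]
  · exact borrow_le_one _

/-- The `i`-th decimal digit of `D - rev D` by schoolbook subtraction; `toNat` loses nothing, as
the value lies in `[0, 10)` for decimal digits `a i`. -/
def subRevDigit (a : ℕ → ℕ) (n i : ℕ) : ℕ :=
  ((a i : ℤ) - a (n - i) - borrowIn a n i + 10 * borrow a n i).toNat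

theorem cast_subRevDigit (ha : ∀ i ≤ n, a i < 10) (i : ℕ) :
    (subRevDigit a n i : ℤ) = (a i : ℤ) - a (n - i) - borrowIn a n i + 10 * borrow a n i := by
  have := ha (n - i) (Nat.sub_le n i)
  have := borrowIn_le_one (a := a) (n := n) i
  rw [subRevDigit, Int.toNat_of_nonneg]
  rw [borrow_eq_ite]
  split <;> omega

theorem subRevDigit_lt_ten (ha : ∀ i ≤ n, a i < 10) {i : ℕ} (hi : i ≤ n) :
    subRevDigit a n i < 10 := by
  have := ha i hi
  rw [← Nat.cast_lt (α := ℤ), cast_subRevDigit ha, borrow_eq_ite]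
  split <;> omega

theorem sum_subRevDigit_mul_pow (ha : ∀ i ≤ n, a i < 10) :
    ∑ i ∈ range (n + 1), (subRevDigit a n i : ℤ) * 10 ^ i
      = ∑ i ∈ range (n + 1), ((a i : ℤ) - a (n - i)) * 10 ^ i + borrow a n n * 10 ^ (n + 1) := by
  have h := sum_range_telescope_carry (10 : ℤ) (fun i => (borrowIn a n i : ℤ)) (n + 1)
  simp only [borrowIn, Nat.cast_zero, sub_zero] at h
  rw [← h, ← sum_add_distrib]
  refine sum_congr rfl fun i _ => ?_
  rw [cast_subRevDigit ha]
  simp only [borrowIn]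
  ring

theorem borrow_self_eq_zero (ha : ∀ i ≤ n, a i < 10)
    (hlt : ∑ i ∈ range (n + 1), a (n - i) * 10 ^ i < ∑ i ∈ range (n + 1), a i * 10 ^ i) :
    borrow a n n = 0 := by
  have hlt' : (0 : ℤ) < ∑ i ∈ range (n + 1), ((a i : ℤ) - a (n - i)) * 10 ^ i := by
    simp only [sub_mul, sum_sub_distrib, sub_pos]
    exact_mod_cast hlt
  have hsum : ∑ i ∈ range (n + 1), (subRevDigit a n i : ℤ) * 10 ^ i < 10 ^ (n + 1) := by
    exact_mod_cast Nat.sum_range_lt_pow (by norm_num) fun i hi =>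
      subRevDigit_lt_ten ha (Nat.lt_succ_iff.mp hi)
  rw [sum_subRevDigit_mul_pow ha] at hsum
  rcases Nat.le_one_iff_eq_zero_or_eq_one.mp (borrow_le_one (a := a) (n := n) n) with h | h
  · exact h
  · rw [h] at hsum; push_cast at hsum; linarith

theorem sum_subRevDigit_rev_mul_pow (ha : ∀ i ≤ n, a i < 10) (hn : borrow a n n = 0) :
    ∑ k ∈ range (n + 1), (subRevDigit a n (n - k) : ℤ) * 10 ^ k
      = ∑ k ∈ range (n + 1), ((a (n - k) : ℤ) - a k) * 10 ^ k
        + 99 * ∑ i ∈ range n, (borrow a n (n - 1 - i) : ℤ) * 10 ^ i := by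
  -- `d k = b_{n-k}`, the borrows read backwards
  set d : ℕ → ℤ := fun k => borrowIn a n (n + 1 - k)
  have h := sum_range_carry_of_boundary_eq_zero (10 : ℤ) (d := d) (n := n)
    (by simp [d, borrowIn, hn]) (by simp [d, borrowIn])
  have hshift : ∀ i ∈ range n, d (i + 1) * 10 ^ i = (borrow a n (n - 1 - i) : ℤ) * 10 ^ i := by
    intro i hi
    have : n + 1 - (i + 1) = n - 1 - i + 1 := by have := mem_range.mp hi; omega
    simp only [d, this, borrowIn]
  rw [sum_congr rfl hshift, show (10 : ℤ) ^ 2 - 1 = 99 by norm_num] at h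
  rw [← h, ← sum_add_distrib]
  refine sum_congr rfl fun k hk => ?_
  have hk : k ≤ n := Nat.lt_succ_iff.mp (mem_range.mp hk)
  have h1 : n + 1 - k = n - k + 1 := by omega
  have h2 : n + 1 - (k + 1) = n - k := by omega
  rw [cast_subRevDigit ha, Nat.sub_sub_self hk]
  simp only [d, h1, h2, borrowIn]
  ring

end Borrow

/-- If `D = Σ_{i=0}^n a_i 10^i` (with `a_n ≠ 0`, digits `< 10`),
`D > rev D`, and `E = D - rev D` has the same number `n+1` of decimal digits as `D`,
then `F = E + rev E = 99 · Σ_{i=0}^{n-1} b_{n-1-i} 10^i`: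
the digit string of `F / 99` is the reverse of the borrow sequence `b_{n-1} … b_1 b_0`. -/
theorem stmt2 (D n : ℕ) (a : ℕ → ℕ)
    (ha : ∀ i, i ≤ n → a i < 10) (han : a n ≠ 0)
    (hD : D = ∑ i ∈ Finset.range (n + 1), a i * 10 ^ i)
    (hlt : rev D < D)
    (hlen : (Nat.digits 10 (D - rev D)).length = n + 1) :
    (D - rev D) + rev (D - rev D) =
      99 * ∑ i ∈ Finset.range n, borrow a n (n - 1 - i) * 10 ^ i := by
  have hrevD : rev D = ∑ i ∈ range (n + 1), a (n - i) * 10 ^ i := by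
    rw [hD, rev_sum_range_succ ha han]
  have hcast : ((D - rev D : ℕ) : ℤ) = ∑ i ∈ range (n + 1), ((a i : ℤ) - a (n - i)) * 10 ^ i := by
    rw [Nat.cast_sub hlt.le, hrevD, hD]
    push_cast
    simp only [sub_mul, sum_sub_distrib]
  have hbn : borrow a n n = 0 := borrow_self_eq_zero ha (hD ▸ hrevD ▸ hlt)
  have hE : D - rev D = ∑ i ∈ range (n + 1), subRevDigit a n i * 10 ^ i := by
    apply Nat.cast_injective (R := ℤ)
    rw [hcast]
    push_cast
    rw [sum_subRevDigit_mul_pow ha, hbn]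
    simp
  have hlead : subRevDigit a n n ≠ 0 :=
    Nat.ne_zero_of_length_digits_sum_range_succ (by norm_num)
      (fun i hi => subRevDigit_lt_ten ha hi) (hE ▸ hlen)
  have hrevE : rev (D - rev D) = ∑ i ∈ range (n + 1), subRevDigit a n (n - i) * 10 ^ i := by
    rw [hE, rev_sum_range_succ (fun i hi => subRevDigit_lt_ten ha hi) hlead]
  apply Nat.cast_injective (R := ℤ)
  push_cast
  rw [hcast, hrevE]
  push_cast
  rw [sum_subRevDigit_rev_mul_pow ha hbn, ← add_assoc, ← sum_add_distrib,
    sum_eq_zero fun i _ => by ring, zero_add]
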